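/- Hat/box lower bound via measure: Let μ be the Lebesgue (coin-flipping) measure on {0,1}^ℕ. For any measurable functions n : {0,1}^ℕ → ℕ and g : {0,1}^ℕ → {0,1} such that for every x, the values n(x) and g(x) depend only on the coordinates of x other than coordinate n(x) (formally: if x and y agree off coordinate n(x) then n(y) = n(x) and g(y) = g(x)), the probability that g(x) = x(n(x)) equals 1/2. -/

import Mathlib

/-!
Flipping the coordinate `k` of a fair coin sequence preserves the coin-flipping measure. On the
event `n x = k` such a flip changes neither `n` nor `g` (the player cannot see box `k`), but it
changes the content of box `k`, so it exchanges "correct guess, `n = k`" with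
"wrong guess, `n = k`". Summing over `k`, correct and wrong guesses have the same probability.
-/

open MeasureTheory
open scoped ENNReal

namespace BlindGuess

section Cylinders

variable {ι α : Type*}

def pointCylinders (ι α : Type*) : Set (Set (ι → α)) :=
  {S | ∃ (s : Finset ι) (f : ι → α), S = {x | ∀ i ∈ s, x i = f i}}

theorem isPiSystem_pointCylinders : IsPiSystem (pointCylinders ι α) := by
  classical
  rintro _ ⟨s, f, rfl⟩ _ ⟨t, f', rfl⟩ ⟨z, hzs, hzt⟩
  refine ⟨s ∪ t, z, ?_⟩
  have hfs : ∀ i ∈ s, f i = z i := fun i hi => (hzs i hi).symm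
  have hft : ∀ i ∈ t, f' i = z i := fun i hi => (hzt i hi).symm
  ext x
  simp +contextual only [Set.mem_inter_iff, Set.mem_ofPred_eq, Finset.mem_union, or_imp,
    forall_and, hfs, hft]

variable [MeasurableSpace α] [MeasurableSingletonClass α]

theorem measurableSet_pointCylinder (s : Finset ι) (f : ι → α) :
    MeasurableSet {x : ι → α | ∀ i ∈ s, x i = f i} :=
  MeasurableSet.pi s.countable_toSet fun i _ => measurableSet_singleton (f i)

variable [Countable α]

theorem generateFrom_pointCylinders :
    MeasurableSpace.generateFrom (pointCylinders ι α) = MeasurableSpace.pi := by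
  refine le_antisymm ?_ (iSup_le fun k => ?_)
  · refine MeasurableSpace.generateFrom_le ?_
    rintro _ ⟨s, f, rfl⟩
    exact measurableSet_pointCylinder s f
  · rw [← measurable_iff_comap_le]
    refine @measurable_to_countable' α _ _ _ (MeasurableSpace.generateFrom _) _ fun a => ?_
    exact MeasurableSpace.measurableSet_generateFrom ⟨{k}, fun _ => a, by ext x; simp⟩

theorem ext_of_pointCylinders {μ ν : Measure (ι → α)} [IsFiniteMeasure μ]
    (h : ∀ (s : Finset ι) (f : ι → α), μ {x | ∀ i ∈ s, x i = f i} = ν {x | ∀ i ∈ s, x i = f i}) :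
    μ = ν := by
  refine ext_of_generate_finite _ generateFrom_pointCylinders.symm isPiSystem_pointCylinders
    (by rintro _ ⟨s, f, rfl⟩; exact h s f) ?_
  rcases isEmpty_or_nonempty (ι → α) with hempty | ⟨⟨f⟩⟩
  · simp [Set.univ_eq_empty_iff.mpr hempty]
  · simpa using h ∅ f

theorem measurePreserving_piCongrRight {μ : Measure (ι → α)} [IsFiniteMeasure μ]
    (hμ : ∀ (s : Finset ι) (f f' : ι → α),
      μ {x | ∀ i ∈ s, x i = f i} = μ {x | ∀ i ∈ s, x i = f' i})
    (σ : ι → Equiv.Perm α) : MeasurePreserving (Equiv.piCongrRight σ) μ μ := by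
  have hσ : Measurable (Equiv.piCongrRight σ) :=
    measurable_pi_lambda _ fun i => (measurable_of_countable (σ i)).comp (measurable_pi_apply i)
  refine ⟨hσ, ext_of_pointCylinders fun s f => ?_⟩
  have hpre : Equiv.piCongrRight σ ⁻¹' {x | ∀ i ∈ s, x i = f i}
      = {x | ∀ i ∈ s, x i = (σ i).symm (f i)} := by
    ext x
    simp [← Equiv.eq_symm_apply]
  rw [Measure.map_apply hσ (measurableSet_pointCylinder s f), hpre, hμ]

end Cylinders

theorem measure_eq_tsum_inter_preimage_singleton {Ω β : Type*} [MeasurableSpace Ω]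
    [MeasurableSpace β] [Countable β] [MeasurableSingletonClass β] (μ : Measure Ω) {n : Ω → β}
    (hn : Measurable n) (S : Set Ω) : μ S = ∑' k, μ (S ∩ n ⁻¹' {k}) := by
  have hfiber (k : β) : MeasurableSet (n ⁻¹' {k}) := hn (measurableSet_singleton k)
  calc μ S = μ.restrict S (⋃ k, n ⁻¹' {k}) := by
        rw [← Set.preimage_iUnion, Set.iUnion_of_singleton, Set.preimage_univ,
          Measure.restrict_apply_univ]
    _ = ∑' k, μ (S ∩ n ⁻¹' {k}) := by
      simp only [measure_iUnion (pairwise_disjoint_fiber n) hfiber,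
        Measure.restrict_apply (hfiber _), Set.inter_comm]

theorem measurableSet_correct {ι α : Type*} [MeasurableSpace ι] [Countable ι]
    [MeasurableSingletonClass ι] [MeasurableSpace α] [MeasurableEq α]
    {n : (ι → α) → ι} {g : (ι → α) → α} (hn : Measurable n) (hg : Measurable g) :
    MeasurableSet {x | g x = x (n x)} :=
  measurableSet_eq_fun hg <| (measurable_from_prod_countable_left
    (f := fun p : (ι → α) × ι => p.1 p.2) measurable_pi_apply).comp (measurable_id.prodMk hn)

section Game

variable {ι : Type*} [DecidableEq ι]

def flipAt (k : ι) : (ι → Bool) ≃ (ι → Bool) :=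
  Equiv.piCongrRight (Pi.mulSingle k Equiv.boolNot)

@[simp]
theorem flipAt_apply_self (k : ι) (x : ι → Bool) : flipAt k x k = !x k := by
  simp [flipAt]

theorem flipAt_apply_of_ne {k i : ι} (h : i ≠ k) (x : ι → Bool) : flipAt k x i = x i := by
  simp [flipAt, h]

@[simp]
theorem flipAt_flipAt (k : ι) (x : ι → Bool) : flipAt k (flipAt k x) = x := by
  ext i
  rcases eq_or_ne i k with rfl | h
  · simp
  · rw [flipAt_apply_of_ne h, flipAt_apply_of_ne h]

def IsBlind {α β : Type*} (n : (ι → α) → ι) (g : (ι → α) → β) : Prop :=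
  ∀ x y : ι → α, (∀ m ≠ n x, x m = y m) → n y = n x ∧ g y = g x

variable {n : (ι → Bool) → ι} {g : (ι → Bool) → Bool}

theorem IsBlind.apply_flipAt (h : IsBlind n g) (x : ι → Bool) :
    n (flipAt (n x) x) = n x ∧ g (flipAt (n x) x) = g x :=
  h x _ fun _ hm => (flipAt_apply_of_ne hm x).symm

theorem IsBlind.apply_flipAt_eq_iff (h : IsBlind n g) (k : ι) (x : ι → Bool) :
    n (flipAt k x) = k ↔ n x = k := by
  refine ⟨fun hk => ?_, fun hk => hk ▸ (h.apply_flipAt x).1⟩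
  simpa [hk] using (h.apply_flipAt (flipAt k x)).1

theorem IsBlind.preimage_flipAt_wrong (h : IsBlind n g) (k : ι) :
    flipAt k ⁻¹' ({x | g x = x (n x)}ᶜ ∩ n ⁻¹' {k}) = {x | g x = x (n x)} ∩ n ⁻¹' {k} := by
  ext x
  simp only [Set.mem_preimage, Set.mem_inter_iff, Set.mem_compl_iff, Set.mem_ofPred_eq,
    Set.mem_singleton_iff, h.apply_flipAt_eq_iff]
  refine and_congr_left fun hk => ?_
  subst hk
  rw [(h.apply_flipAt x).1, (h.apply_flipAt x).2, flipAt_apply_self]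
  exact Bool.not_eq_not

variable [Countable ι] [MeasurableSpace ι] [MeasurableSingletonClass ι]

theorem IsBlind.measure_correct_eq_measure_wrong {μ : Measure (ι → Bool)} [IsFiniteMeasure μ]
    (hμ : ∀ (s : Finset ι) (f f' : ι → Bool),
      μ {x | ∀ i ∈ s, x i = f i} = μ {x | ∀ i ∈ s, x i = f' i})
    (hn : Measurable n) (hg : Measurable g) (h : IsBlind n g) :
    μ {x | g x = x (n x)} = μ {x | g x = x (n x)}ᶜ := by
  rw [measure_eq_tsum_inter_preimage_singleton μ hn,
    measure_eq_tsum_inter_preimage_singleton μ hn {x | g x = x (n x)}ᶜ]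
  refine tsum_congr fun k => ?_
  have hwrong : MeasurableSet ({x | g x = x (n x)}ᶜ ∩ n ⁻¹' {k}) :=
    (measurableSet_correct hn hg).compl.inter (hn (measurableSet_singleton k))
  rw [← h.preimage_flipAt_wrong k]
  exact (measurePreserving_piCongrRight hμ _).measure_preimage hwrong.nullMeasurableSet

end Game

end BlindGuess

open BlindGuess

theorem blind_guess_half (μ : Measure (ℕ → Bool)) [IsProbabilityMeasure μ]
    (hμ : ∀ (s : Finset ℕ) (f : ℕ → Bool),
      μ {x | ∀ n ∈ s, x n = f n} = (1 / 2 : ℝ≥0∞) ^ s.card)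
    (n : (ℕ → Bool) → ℕ) (g : (ℕ → Bool) → Bool)
    (hn : Measurable n) (hg : Measurable g)
    (hblind : ∀ x y : ℕ → Bool, (∀ m ≠ n x, x m = y m) → n y = n x ∧ g y = g x) :
    μ {x | g x = x (n x)} = 1 / 2 := by
  have hsym : μ {x | g x = x (n x)} = μ {x | g x = x (n x)}ᶜ :=
    IsBlind.measure_correct_eq_measure_wrong (fun s f f' => by rw [hμ, hμ]) hn hg hblind
  have htotal : μ {x | g x = x (n x)} + μ {x | g x = x (n x)}ᶜ = 1 := by
    rw [measure_add_measure_compl (measurableSet_correct hn hg), measure_univ]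
  rw [ENNReal.eq_div_iff two_ne_zero ENNReal.ofNat_ne_top, two_mul]
  nth_rewrite 2 [hsym]
  exact htotal
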